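/- Let L be a CSL on a separable Hilbert space. If every element of L is singly generated (for each P ∈ L there is x ∈ PH with {Alg L · x} = PH), then L is hyperatomic (every nonzero projection in L is generated by finitely many atoms). -/

import Mathlib

/-!
Let `x` generate `PH` as an `Alg L`-module. The open mapping theorem for `T ↦ T x` on the Banach
space `Alg L` gives `‖P (1 - Q)‖ ≤ C ‖(1 - Q) x‖` for every `Q ∈ L`, so `‖(1 - Q) x‖ ≥ 1 / C`
whenever `P ≰ Q`: a nonzero projection has norm `1`. Hence `x` stays at distance `1 / C` from the
ranges of any chain of such `Q`, and by Zorn's lemma every `Q ∈ L` with `P ≰ Q` lies under a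
maximal one. Each maximal `q` yields an atom `P (1 - q)`; distinct maximal elements give
orthogonal atoms, each moving `x` by at least `1 / C`, so by Bessel's inequality there are only
finitely many. They generate `P`: a projection `F ∈ L` above all of them with `P ≰ F` lies under
some maximal `q`, and then so does the atom `P (1 - q)`, which is orthogonal to `q`.
-/

noncomputable section

open scoped InnerProductSpace

variable {H : Type*} [NormedAddCommGroup H] [InnerProductSpace ℂ H] [CompleteSpace H]

/-- `P` is an orthogonal projection on `H`. -/
def IsOrthProj (P : H →L[ℂ] H) : Prop := IsSelfAdjoint P ∧ P ∘L P = P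

/-- The usual order on orthogonal projections: `P ≤ Q` iff `Q P = P` (range containment). -/
def pLE (P Q : H →L[ℂ] H) : Prop := Q ∘L P = P

/-- An atom of the lattice `L`: a nonzero interval projection `E - F` (`E, F ∈ L`, `F ≤ E`)
containing no interval projection other than `0` and itself. -/
def IsAtomOf (L : Set (H →L[ℂ] H)) (A : H →L[ℂ] H) : Prop :=
  A ≠ 0 ∧ (∃ E ∈ L, ∃ F ∈ L, pLE F E ∧ A = E - F) ∧
    ∀ E ∈ L, ∀ F ∈ L, pLE F E → pLE (E - F) A → E - F = 0 ∨ E - F = A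

/-- `L` is a commutative subspace lattice (CSL): a strongly closed complete lattice of
mutually commuting orthogonal projections containing `0` and `I`.  Completeness is expressed
by the existence, for every subset, of a member of `L` realizing the honest infimum
(intersection of ranges) and the honest supremum (closed span of ranges). -/
def IsCSL (L : Set (H →L[ℂ] H)) : Prop :=
  (∀ P ∈ L, IsOrthProj P) ∧
  (∀ P ∈ L, ∀ Q ∈ L, P ∘L Q = Q ∘L P) ∧
  (0 : H →L[ℂ] H) ∈ L ∧ (1 : H →L[ℂ] H) ∈ L ∧
  (∀ S ⊆ L, ∃ P ∈ L, (∀ Q ∈ S, pLE P Q) ∧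
      LinearMap.range (P : H →ₗ[ℂ] H) = ⨅ Q ∈ S, LinearMap.range (Q : H →ₗ[ℂ] H)) ∧
  (∀ S ⊆ L, ∃ P ∈ L, (∀ Q ∈ S, pLE Q P) ∧
      LinearMap.range (P : H →ₗ[ℂ] H) = (⨆ Q ∈ S, LinearMap.range (Q : H →ₗ[ℂ] H)).topologicalClosure)

/-- `Alg L`: the algebra of operators leaving every projection of `L` invariant. -/
def AlgL (L : Set (H →L[ℂ] H)) : Set (H →L[ℂ] H) :=
  {T | ∀ P ∈ L, (1 - P) ∘L (T ∘L P) = 0}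

/-- The (not necessarily closed) orbit `{Alg L · x}` of a vector `x`. -/
def orbit (L : Set (H →L[ℂ] H)) (x : H) : Set H :=
  {y | ∃ T ∈ AlgL L, T x = y}

/-- `P` is hyperatomic in `L`: `P = E(A₁, …, Aₖ)`, the smallest projection of `L`
dominating finitely many atoms `A₁, …, Aₖ` of `L`. -/
def HyperatomicIn (L : Set (H →L[ℂ] H)) (P : H →L[ℂ] H) : Prop :=
  ∃ (k : ℕ) (A : Fin k → H →L[ℂ] H), (∀ j, IsAtomOf L (A j)) ∧
    (∀ j, pLE (A j) P) ∧ ∀ F ∈ L, (∀ j, pLE (A j) F) → pLE P F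

lemma IsIdempotentElem.mul_mul_one_sub_self {R : Type*} [Ring R] {p q : R}
    (hq : IsIdempotentElem q) (hpq : Commute p q) : q * (p * (1 - q)) = 0 := by
  rw [hpq.symm.left_comm, hq.mul_one_sub_self, mul_zero]

lemma IsStarProjection.mul_one_sub {R : Type*} [Ring R] [StarRing R] {p q : R}
    (hp : IsStarProjection p) (hq : IsStarProjection q) (hpq : Commute p q) :
    IsStarProjection (p * (1 - q)) :=
  hp.mul hq.one_sub ((Commute.one_right p).sub_right hpq)

lemma IsIdempotentElem.one_le_norm {R : Type*} [NormedRing R] {e : R} (he : IsIdempotentElem e)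
    (h0 : e ≠ 0) : 1 ≤ ‖e‖ := by
  have h := norm_mul_le e e
  rw [he.eq] at h
  exact (le_mul_iff_one_le_right (norm_pos_iff.mpr h0)).mp h

lemma range_le_range_iff_mul_eq {R M : Type*} [Ring R] [TopologicalSpace M] [AddCommGroup M]
    [Module R M] {p q : M →L[R] M} (hq : IsIdempotentElem q) :
    LinearMap.range (p : M →ₗ[R] M) ≤ LinearMap.range (q : M →ₗ[R] M) ↔ q * p = p := by
  rw [← LinearMap.IsIdempotentElem.comp_eq_right_iff
    (ContinuousLinearMap.IsIdempotentElem.toLinearMap hq), ← ContinuousLinearMap.toLinearMap_comp,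
    ContinuousLinearMap.coe_inj]
  rfl

def atomsUnder {R : Type*} [Ring R] [PartialOrder R] (L : Set R) (P : R) : Set R :=
  {a | ∃ q, Maximal (fun r => r ∈ L ∧ ¬ P ≤ r) q ∧ P * (1 - q) = a}

section CommutingProjections

variable {R : Type*} [CStarAlgebra R] [PartialOrder R] [StarOrderedRing R] {p q r : R}

namespace IsStarProjection

lemma mul_one_sub_le (hp : IsStarProjection p) (hq : IsStarProjection q) (hpq : Commute p q) :
    p * (1 - q) ≤ p := by
  rw [(hp.mul_one_sub hq hpq).le_iff_mul_eq_right hp, ← mul_assoc, hp.isIdempotentElem.eq]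

lemma mul_one_sub_eq_zero_iff (hp : IsStarProjection p) (hq : IsStarProjection q) :
    p * (1 - q) = 0 ↔ p ≤ q := by
  rw [hp.le_iff_mul_eq_left hq, mul_sub, mul_one, sub_eq_zero, eq_comm]

lemma le_add_sub_mul_left (hp : IsStarProjection p) (hq : IsStarProjection q)
    (hpq : Commute p q) : p ≤ p + q - p * q := by
  rw [hp.le_iff_mul_eq_left (hp.add_sub_mul_of_commute hpq hq), mul_sub, mul_add,
    ← mul_assoc, hp.isIdempotentElem.eq, add_sub_cancel_right]

lemma le_add_sub_mul_right (hp : IsStarProjection p) (hq : IsStarProjection q)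
    (hpq : Commute p q) : q ≤ p + q - p * q := by
  simpa only [add_comm p, hpq.eq] using hq.le_add_sub_mul_left hp hpq.symm

end IsStarProjection

structure IsCommProjSupClosed (L : Set R) : Prop where
  isStarProjection : ∀ p ∈ L, IsStarProjection p
  commute : ∀ p ∈ L, ∀ q ∈ L, Commute p q
  add_sub_mul_mem : ∀ p ∈ L, ∀ q ∈ L, p + q - p * q ∈ L

namespace IsCommProjSupClosed

variable {L : Set R} {P : R}

lemma mul_one_sub_le_or_le (hL : IsCommProjSupClosed L) (hP : P ∈ L)
    (hq : Maximal (fun r => r ∈ L ∧ ¬ P ≤ r) q) (hr : r ∈ L) :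
    P * (1 - q) ≤ r ∨ r ≤ q := by
  have hqL := hq.prop.1
  have hPq := hL.commute P hP q hqL
  have hqr := hL.commute q hqL r hr
  have hPp := hL.isStarProjection P hP
  have hqp := hL.isStarProjection q hqL
  have hrp := hL.isStarProjection r hr
  set j := q + r - q * r
  have hjp : IsStarProjection j := hqp.add_sub_mul_of_commute hqr hrp
  by_cases hPj : P ≤ j
  · left
    -- `q` kills `P (1 - q)`, so the join `j` of `q` and `r` acts on it as `r` does
    have hq0 := hqp.isIdempotentElem.mul_mul_one_sub_self hPq
    rw [(hPp.mul_one_sub hqp hPq).le_iff_mul_eq_right hrp]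
    calc r * (P * (1 - q)) = j * (P * (1 - q)) := by
          simp only [j, sub_mul, add_mul, mul_assoc, hq0, hqr.eq, zero_add, mul_zero, sub_zero]
      _ = P * (1 - q) := by rw [← mul_assoc, (hPp.le_iff_mul_eq_right hjp).mp hPj]
  · right
    have hqj := hq.eq_of_le ⟨hL.add_sub_mul_mem q hqL r hr, hPj⟩
      (hqp.le_add_sub_mul_left hrp hqr)
    exact hqj ▸ hqp.le_add_sub_mul_right hrp hqr

lemma eq_zero_or_eq_of_sub_le (hL : IsCommProjSupClosed L) (hP : P ∈ L)
    (hq : Maximal (fun r => r ∈ L ∧ ¬ P ≤ r) q) {E F : R} (hE : E ∈ L) (hF : F ∈ L)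
    (hFE : F ≤ E) (hle : E - F ≤ P * (1 - q)) : E - F = 0 ∨ E - F = P * (1 - q) := by
  have hqL := hq.prop.1
  have hPq := hL.commute P hP q hqL
  have hPp := hL.isStarProjection P hP
  have hqp := hL.isStarProjection q hqL
  have hEp := hL.isStarProjection E hE
  have hFp := hL.isStarProjection F hF
  have hap := hPp.mul_one_sub hqp hPq
  have hDp : IsStarProjection (E - F) := (hFp.le_iff_sub hEp).mp hFE
  have hFE' : F * E = F := (hFp.le_iff_mul_eq_left hEp).mp hFE
  have haD : P * (1 - q) * (E - F) = E - F := (hDp.le_iff_mul_eq_right hap).mp hle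
  rcases hL.mul_one_sub_le_or_le hP hq hF with haF | hFq
  · left
    have hFD : F * (E - F) = E - F := (hDp.le_iff_mul_eq_right hFp).mp (hle.trans haF)
    rwa [mul_sub, hFE', hFp.isIdempotentElem.eq, sub_self, eq_comm] at hFD
  rcases hL.mul_one_sub_le_or_le hP hq hE with haE | hEq
  · right
    have haF : P * (1 - q) * F = 0 := by
      rw [← (hFp.le_iff_mul_eq_right hqp).mp hFq, ← mul_assoc, mul_assoc P,
        hqp.one_sub_mul_self, mul_zero, zero_mul]
    rw [← haD, mul_sub, (hap.le_iff_mul_eq_left hEp).mp haE, haF, sub_zero]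
  · left
    have hqD : q * (E - F) = E - F :=
      (hDp.le_iff_mul_eq_right hqp).mp ((sub_le_self E hFp.nonneg).trans hEq)
    rwa [← haD, ← mul_assoc, hqp.isIdempotentElem.mul_mul_one_sub_self hPq, zero_mul,
      eq_comm, haD] at hqD

lemma eq_or_mul_eq_zero (hL : IsCommProjSupClosed L) (hP : P ∈ L) {q₁ q₂ : R}
    (hq₁ : Maximal (fun r => r ∈ L ∧ ¬ P ≤ r) q₁) (hq₂ : Maximal (fun r => r ∈ L ∧ ¬ P ≤ r) q₂) :
    P * (1 - q₁) = P * (1 - q₂) ∨ P * (1 - q₁) * (P * (1 - q₂)) = 0 := by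
  have hPq₁ := hL.commute P hP q₁ hq₁.prop.1
  have hPp := hL.isStarProjection P hP
  have hq₁p := hL.isStarProjection q₁ hq₁.prop.1
  have hq₂p := hL.isStarProjection q₂ hq₂.prop.1
  have hap := hPp.mul_one_sub hq₁p hPq₁
  rcases hL.mul_one_sub_le_or_le hP hq₁ hq₂.prop.1 with ha₁q₂ | hq₂q₁
  · right
    have haP : P * (1 - q₁) * P = P * (1 - q₁) :=
      (hap.le_iff_mul_eq_left hPp).mp (hPp.mul_one_sub_le hq₁p hPq₁)
    rw [← mul_assoc, haP, mul_sub, mul_one, (hap.le_iff_mul_eq_left hq₂p).mp ha₁q₂, sub_self]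
  · left
    rw [hq₂.eq_of_le hq₁.prop hq₂q₁]

lemma not_mul_one_sub_le (hL : IsCommProjSupClosed L) (hP : P ∈ L) (hq : q ∈ L) (hPq : ¬ P ≤ q) :
    ¬ P * (1 - q) ≤ q := by
  have hPp := hL.isStarProjection P hP
  have hqp := hL.isStarProjection q hq
  intro hle
  have hqa := (hPp.mul_one_sub hqp (hL.commute P hP q hq)).le_iff_mul_eq_right hqp |>.mp hle
  rw [hqp.isIdempotentElem.mul_mul_one_sub_self (hL.commute P hP q hq), eq_comm,
    hPp.mul_one_sub_eq_zero_iff hqp] at hqa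
  exact hPq hqa

end IsCommProjSupClosed

end CommutingProjections

section Operators

lemma IsOrthProj.isStarProjection {P : H →L[ℂ] H} (h : IsOrthProj P) : IsStarProjection P :=
  ⟨h.2, h.1⟩

lemma pLE_iff_le {P Q : H →L[ℂ] H} (hP : IsStarProjection P) (hQ : IsStarProjection Q) :
    pLE P Q ↔ P ≤ Q :=
  (hP.le_iff_mul_eq_right hQ).symm

lemma IsStarProjection.norm_apply_le {p : H →L[ℂ] H} (hp : IsStarProjection p) (v : H) :
    ‖p v‖ ≤ ‖v‖ := by
  simpa using p.le_of_opNorm_le (hp.norm_le p) v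

lemma IsSelfAdjoint.inner_apply_apply {a : H →L[ℂ] H} (ha : IsSelfAdjoint a) (b : H →L[ℂ] H)
    (x : H) : ⟪a x, b x⟫_ℂ = ⟪x, (a * b) x⟫_ℂ := by
  simpa [ha.adjoint_eq] using a.adjoint_inner_left (b x) x

variable {L : Set (H →L[ℂ] H)}

namespace IsCSL

lemma isStarProjection (hL : IsCSL L) {P : H →L[ℂ] H} (hP : P ∈ L) : IsStarProjection P :=
  (hL.1 P hP).isStarProjection

lemma commute (hL : IsCSL L) {P Q : H →L[ℂ] H} (hP : P ∈ L) (hQ : Q ∈ L) : Commute P Q :=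
  hL.2.1 P hP Q hQ

lemma exists_sup (hL : IsCSL L) {S : Set (H →L[ℂ] H)} (hS : S ⊆ L) :
    ∃ G ∈ L, (∀ Q ∈ S, pLE Q G) ∧ LinearMap.range (G : H →ₗ[ℂ] H) =
      (⨆ Q ∈ S, LinearMap.range (Q : H →ₗ[ℂ] H)).topologicalClosure :=
  hL.2.2.2.2.2 S hS

lemma add_sub_mul_mem (hL : IsCSL L) {P Q : H →L[ℂ] H} (hP : P ∈ L) (hQ : Q ∈ L) :
    P + Q - P * Q ∈ L := by
  have hPp := hL.isStarProjection hP
  have hQp := hL.isStarProjection hQ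
  have hPQ := hL.commute hP hQ
  have hJp := hPp.add_sub_mul_of_commute hPQ hQp
  obtain ⟨G, hG, hPQG, hrange⟩ := hL.exists_sup (Set.pair_subset hP hQ)
  have hGp := hL.isStarProjection hG
  suffices G = P + Q - P * Q from this ▸ hG
  refine (ContinuousLinearMap.IsStarProjection.ext_iff hGp hJp).mpr (le_antisymm ?_ ?_)
  · rw [hrange, iSup_pair]
    refine Submodule.topologicalClosure_minimal _ (sup_le ?_ ?_)
      (ContinuousLinearMap.IsIdempotentElem.isClosed_range hJp.isIdempotentElem)
    · exact (range_le_range_iff_mul_eq hJp.isIdempotentElem).mpr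
        ((hPp.le_iff_mul_eq_right hJp).mp (hPp.le_add_sub_mul_left hQp hPQ))
    · exact (range_le_range_iff_mul_eq hJp.isIdempotentElem).mpr
        ((hQp.le_iff_mul_eq_right hJp).mp (hPp.le_add_sub_mul_right hQp hPQ))
  · have hGP : G * P = P := hPQG P (Set.mem_insert P {Q})
    have hGQ : G * Q = Q := hPQG Q (Set.mem_insert_of_mem P rfl)
    rw [range_le_range_iff_mul_eq hGp.isIdempotentElem, mul_sub, mul_add, ← mul_assoc, hGP, hGQ]

lemma isCommProjSupClosed (hL : IsCSL L) : IsCommProjSupClosed L where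
  isStarProjection _ hP := hL.isStarProjection hP
  commute _ hP _ hQ := hL.commute hP hQ
  add_sub_mul_mem _ hP _ hQ := hL.add_sub_mul_mem hP hQ

end IsCSL

def algLSubmodule (L : Set (H →L[ℂ] H)) : Submodule ℂ (H →L[ℂ] H) :=
  ⨅ Q ∈ L, LinearMap.ker ((ContinuousLinearMap.compL ℂ H H H (1 - Q)).comp
    ((ContinuousLinearMap.compL ℂ H H H).flip Q) : (H →L[ℂ] H) →ₗ[ℂ] H →L[ℂ] H)

lemma mem_algLSubmodule {T : H →L[ℂ] H} : T ∈ algLSubmodule L ↔ T ∈ AlgL L := by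
  simp [algLSubmodule, AlgL]

lemma isClosed_algLSubmodule : IsClosed (algLSubmodule L : Set (H →L[ℂ] H)) := by
  simp only [algLSubmodule, Submodule.coe_iInf]
  exact isClosed_biInter fun Q _ => ContinuousLinearMap.isClosed_ker _

lemma exists_norm_le_of_orbit_eq {P : H →L[ℂ] H} (hP : IsStarProjection P) {x : H}
    (horb : orbit L x = LinearMap.range (P : H →ₗ[ℂ] H)) :
    ∃ C > 0, ∀ y ∈ LinearMap.range (P : H →ₗ[ℂ] H), ∃ T ∈ AlgL L, T x = y ∧ ‖T‖ ≤ C * ‖y‖ := by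
  set N := LinearMap.range (P : H →ₗ[ℂ] H)
  have : CompleteSpace (algLSubmodule L) := isClosed_algLSubmodule.completeSpace_coe
  have : CompleteSpace N :=
    (ContinuousLinearMap.IsIdempotentElem.isClosed_range hP.isIdempotentElem).completeSpace_coe
  have hmem (T : algLSubmodule L) : (T : H →L[ℂ] H) x ∈ N := by
    rw [← SetLike.mem_coe, ← horb]
    exact ⟨T, mem_algLSubmodule.mp T.2, rfl⟩
  let φ : algLSubmodule L →L[ℂ] N :=
    ((ContinuousLinearMap.apply ℂ H x).comp (algLSubmodule L).subtypeL).codRestrict N hmem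
  have hφ : Function.Surjective φ := by
    rintro ⟨y, hy⟩
    obtain ⟨T, hT, rfl⟩ : y ∈ orbit L x := horb ▸ hy
    exact ⟨⟨T, mem_algLSubmodule.mpr hT⟩, rfl⟩
  obtain ⟨C, hC, hφC⟩ := φ.exists_preimage_norm_le hφ
  refine ⟨C, hC, fun y hy => ?_⟩
  obtain ⟨T, hTy, hTC⟩ := hφC ⟨y, hy⟩
  exact ⟨T, mem_algLSubmodule.mp T.2, congrArg Subtype.val hTy, hTC⟩

lemma norm_one_sub_apply_le {Q T : H →L[ℂ] H} (hQ : Q ∈ L) (hQp : IsStarProjection Q)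
    (hT : T ∈ AlgL L) (x : H) : ‖(1 - Q) (T x)‖ ≤ ‖T‖ * ‖(1 - Q) x‖ := by
  have hTQ : (1 - Q) (T (Q x)) = 0 := congrArg (· x) (hT Q hQ)
  have hsplit : (1 - Q) (T x) = (1 - Q) (T ((1 - Q) x)) := by
    simp only [sub_apply, one_apply_eq_self, map_sub] at hTQ ⊢
    rw [hTQ, sub_zero]
  rw [hsplit]
  exact (hQp.one_sub.norm_apply_le _).trans (T.le_opNorm _)

lemma exists_pos_le_norm_one_sub_apply (hL : IsCSL L) {P : H →L[ℂ] H} (hP : P ∈ L) {x : H}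
    (horb : orbit L x = LinearMap.range (P : H →ₗ[ℂ] H)) :
    ∃ δ > 0, ∀ Q ∈ L, ¬ P ≤ Q → δ ≤ ‖(1 - Q) x‖ := by
  have hPp := hL.isStarProjection hP
  obtain ⟨C, hC, hCT⟩ := exists_norm_le_of_orbit_eq hPp horb
  refine ⟨C⁻¹, inv_pos.mpr hC, fun Q hQ hPQ => ?_⟩
  have hQp := hL.isStarProjection hQ
  have hPQc : Commute P (1 - Q) := (Commute.one_right P).sub_right (hL.commute hP hQ)
  -- every `P v` is some `T x` with `‖T‖ ≤ C ‖v‖`, and `(1 - Q) T x` only depends on `(1 - Q) x`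
  have hbound : ‖P * (1 - Q)‖ ≤ C * ‖(1 - Q) x‖ := by
    refine ContinuousLinearMap.opNorm_le_bound _ (by positivity) fun v => ?_
    obtain ⟨T, hT, hTx, hTC⟩ := hCT (P v) ⟨v, rfl⟩
    calc ‖(P * (1 - Q)) v‖ = ‖(1 - Q) (T x)‖ := by rw [hPQc.eq, hTx]; rfl
      _ ≤ ‖T‖ * ‖(1 - Q) x‖ := norm_one_sub_apply_le hQ hQp hT x
      _ ≤ C * ‖v‖ * ‖(1 - Q) x‖ := by
          gcongr
          exact hTC.trans (by gcongr; exact hPp.norm_apply_le v)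
      _ = C * ‖(1 - Q) x‖ * ‖v‖ := by ring
  have hne : P * (1 - Q) ≠ 0 := fun h => hPQ ((hPp.mul_one_sub_eq_zero_iff hQp).mp h)
  have h1 := (hPp.mul_one_sub hQp (hL.commute hP hQ)).isIdempotentElem.one_le_norm hne
  rw [inv_le_iff_one_le_mul₀' hC]
  exact h1.trans hbound

lemma notMem_topologicalClosure_iSup_range {c : Set (H →L[ℂ] H)} (hc : IsChain (· ≤ ·) c)
    (hcne : c.Nonempty) (hcp : ∀ Q ∈ c, IsStarProjection Q) {x : H} {δ : ℝ} (hδ : 0 < δ)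
    (hfar : ∀ Q ∈ c, δ ≤ ‖(1 - Q) x‖) :
    x ∉ (⨆ Q ∈ c, LinearMap.range (Q : H →ₗ[ℂ] H)).topologicalClosure := by
  have hdir : DirectedOn (· ≤ ·) ((fun Q : H →L[ℂ] H => LinearMap.range (Q : H →ₗ[ℂ] H)) '' c) := by
    have hmono {a b} (ha : a ∈ c) (hb : b ∈ c) (hab : a ≤ b) :
        LinearMap.range (a : H →ₗ[ℂ] H) ≤ LinearMap.range (b : H →ₗ[ℂ] H) :=
      (range_le_range_iff_mul_eq (hcp b hb).isIdempotentElem).mpr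
        (((hcp a ha).le_iff_mul_eq_right (hcp b hb)).mp hab)
    rintro _ ⟨a, ha, rfl⟩ _ ⟨b, hb, rfl⟩
    rcases hc.total ha hb with hab | hba
    · exact ⟨_, ⟨b, hb, rfl⟩, hmono ha hb hab, le_rfl⟩
    · exact ⟨_, ⟨a, ha, rfl⟩, le_rfl, hmono hb ha hba⟩
  have hdist : ∀ u ∈ ⨆ Q ∈ c, LinearMap.range (Q : H →ₗ[ℂ] H), δ ≤ ‖x - u‖ := by
    intro u hu
    rw [← sSup_image, Submodule.mem_sSup_of_directed (hcne.image _) hdir] at hu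
    obtain ⟨_, ⟨Q, hQ, rfl⟩, huQ⟩ := hu
    have hQu : (1 - Q) u = 0 := by
      rw [sub_apply, one_apply_eq_self, sub_eq_zero, eq_comm]
      exact (LinearMap.IsIdempotentElem.mem_range_iff
        (ContinuousLinearMap.IsIdempotentElem.toLinearMap (hcp Q hQ).isIdempotentElem)).mp huQ
    calc δ ≤ ‖(1 - Q) x‖ := hfar Q hQ
      _ = ‖(1 - Q) (x - u)‖ := by rw [map_sub, hQu, sub_zero]
      _ ≤ ‖x - u‖ := (hcp Q hQ).one_sub.norm_apply_le _
  intro hx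
  rw [← SetLike.mem_coe, Submodule.topologicalClosure_coe, Metric.mem_closure_iff] at hx
  obtain ⟨u, hu, hxu⟩ := hx δ hδ
  exact (hdist u hu).not_gt (by rwa [← dist_eq_norm])

lemma finite_of_pairwise_mul_eq_zero {S : Set (H →L[ℂ] H)} (hSp : ∀ a ∈ S, IsStarProjection a)
    (hS : S.Pairwise fun a b => a * b = 0) {x : H} {δ : ℝ} (hδ : 0 < δ)
    (hle : ∀ a ∈ S, δ ≤ ‖a x‖) : S.Finite := by
  have hne (a : S) : (a : H →L[ℂ] H) x ≠ 0 := norm_pos_iff.mp (hδ.trans_le (hle a a.2))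
  let e : S → H := fun a => (‖(a : H →L[ℂ] H) x‖⁻¹ : ℂ) • (a : H →L[ℂ] H) x
  have he : Orthonormal ℂ e := by
    refine ⟨fun a => ?_, fun a b hab => ?_⟩
    · simp [e, norm_smul, inv_mul_cancel₀ (norm_ne_zero_iff.mpr (hne a))]
    · simp [e, inner_smul_left, inner_smul_right, (hSp a a.2).isSelfAdjoint.inner_apply_apply,
        hS a.2 b.2 (Subtype.coe_ne_coe.mpr hab)]
  have hex (a : S) : ‖⟪e a, x⟫_ℂ‖ = ‖(a : H →L[ℂ] H) x‖ := by
    have ha := hSp a a.2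
    have hsq : ‖⟪(a : H →L[ℂ] H) x, x⟫_ℂ‖ = ‖(a : H →L[ℂ] H) x‖ ^ 2 := by
      have h := ha.isSelfAdjoint.inner_apply_apply a x
      rw [ha.isIdempotentElem.eq, inner_self_eq_norm_sq_to_K] at h
      rw [norm_inner_symm, ← h]
      simp
    rw [inner_smul_left, norm_mul, hsq]
    simp [sq, ← mul_assoc, inv_mul_cancel₀ (norm_ne_zero_iff.mpr (hne a))]
  -- Bessel: the coefficients `⟪e a, x⟫`, all of norm at least `δ`, are square-summable
  have hfin := (he.inner_products_summable x).tendsto_cofinite_zero.eventually_lt_const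
    (by positivity : (0 : ℝ) < δ ^ 2)
  rw [Filter.eventually_cofinite] at hfin
  have huniv : {a : S | ¬ ‖⟪e a, x⟫_ℂ‖ ^ 2 < δ ^ 2} = Set.univ :=
    Set.eq_univ_of_forall fun a => by
      rw [Set.mem_ofPred_eq, hex, not_lt]
      exact pow_le_pow_left₀ hδ.le (hle a a.2) 2
  rw [huniv, Set.finite_univ_iff] at hfin
  exact Set.finite_coe_iff.mp hfin

namespace IsCSL

variable {P : H →L[ℂ] H}

lemma exists_le_maximal (hL : IsCSL L) (hP : P ∈ L) {x : H} (hx : P x = x)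
    {δ : ℝ} (hδ : 0 < δ) (hfar : ∀ Q ∈ L, ¬ P ≤ Q → δ ≤ ‖(1 - Q) x‖) {F : H →L[ℂ] H}
    (hF : F ∈ L) (hPF : ¬ P ≤ F) : ∃ q, F ≤ q ∧ Maximal (fun r => r ∈ L ∧ ¬ P ≤ r) q := by
  refine zorn_le_nonempty₀ {r | r ∈ L ∧ ¬ P ≤ r} (fun c hcs hc Q hQc => ?_) F ⟨hF, hPF⟩
  obtain ⟨G, hG, hcG, hrange⟩ := hL.exists_sup fun Q hQ => (hcs hQ).1
  have hGp := hL.isStarProjection hG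
  refine ⟨G, ⟨hG, fun hPG => ?_⟩,
    fun Q hQ => (pLE_iff_le (hL.isStarProjection (hcs hQ).1) hGp).mp (hcG Q hQ)⟩
  refine notMem_topologicalClosure_iSup_range hc ⟨Q, hQc⟩
    (fun Q hQ => hL.isStarProjection (hcs hQ).1) hδ (fun Q hQ => hfar Q (hcs hQ).1 (hcs hQ).2) ?_
  rw [← hrange]
  refine ⟨x, ?_⟩
  have hGP : G * P = P := ((hL.isStarProjection hP).le_iff_mul_eq_right hGp).mp hPG
  calc G x = G (P x) := by rw [hx]
    _ = x := by rw [← mul_apply_eq_comp, hGP, hx]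

lemma isAtomOf_mul_one_sub (hL : IsCSL L) (hP : P ∈ L) {q : H →L[ℂ] H}
    (hq : Maximal (fun r => r ∈ L ∧ ¬ P ≤ r) q) : IsAtomOf L (P * (1 - q)) := by
  have hqL := hq.prop.1
  have hPp := hL.isStarProjection hP
  have hqp := hL.isStarProjection hqL
  have hPq := hL.commute hP hqL
  refine ⟨fun h => hq.prop.2 ((hPp.mul_one_sub_eq_zero_iff hqp).mp h),
    ⟨P + q - P * q, hL.add_sub_mul_mem hP hqL, q, hqL, ?_, by noncomm_ring⟩,
    fun E hE F hF hFE hle => ?_⟩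
  · exact (pLE_iff_le hqp (hPp.add_sub_mul_of_commute hPq hqp)).mpr
      (hPp.le_add_sub_mul_right hqp hPq)
  · have hFp := hL.isStarProjection hF
    have hEp := hL.isStarProjection hE
    rw [pLE_iff_le hFp hEp] at hFE
    rw [pLE_iff_le ((hFp.le_iff_sub hEp).mp hFE) (hPp.mul_one_sub hqp hPq)] at hle
    exact hL.isCommProjSupClosed.eq_zero_or_eq_of_sub_le hP hq hE hF hFE hle

lemma finite_atomsUnder (hL : IsCSL L) (hP : P ∈ L) {x : H} (hx : P x = x) {δ : ℝ} (hδ : 0 < δ)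
    (hfar : ∀ Q ∈ L, ¬ P ≤ Q → δ ≤ ‖(1 - Q) x‖) : (atomsUnder L P).Finite := by
  have hPp := hL.isStarProjection hP
  refine finite_of_pairwise_mul_eq_zero (x := x) ?_ ?_ hδ ?_
  · rintro _ ⟨q, hq, rfl⟩
    exact hPp.mul_one_sub (hL.isStarProjection hq.prop.1) (hL.commute hP hq.prop.1)
  · rintro _ ⟨q₁, hq₁, rfl⟩ _ ⟨q₂, hq₂, rfl⟩ hne
    exact (hL.isCommProjSupClosed.eq_or_mul_eq_zero hP hq₁ hq₂).resolve_left hne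
  · rintro _ ⟨q, hq, rfl⟩
    have hPq : Commute P (1 - q) := (Commute.one_right P).sub_right (hL.commute hP hq.prop.1)
    rw [hPq.eq, mul_apply_eq_comp, hx]
    exact hfar q hq.prop.1 hq.prop.2

lemma hyperatomicIn_of_finite (hL : IsCSL L) (hP : P ∈ L) (hfin : (atomsUnder L P).Finite)
    (hmax : ∀ F ∈ L, ¬ P ≤ F → ∃ q, F ≤ q ∧ Maximal (fun r => r ∈ L ∧ ¬ P ≤ r) q) :
    HyperatomicIn L P := by
  have hPp := hL.isStarProjection hP
  obtain ⟨k, A, hA⟩ := hfin.fin_embedding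
  have hAmem (j : Fin k) : A j ∈ atomsUnder L P := hA ▸ Set.mem_range_self j
  refine ⟨k, A, fun j => ?_, fun j => ?_, fun F hF hAF => ?_⟩
  · obtain ⟨q, hq, hqA⟩ := hAmem j
    exact hqA ▸ hL.isAtomOf_mul_one_sub hP hq
  · obtain ⟨q, hq, hqA⟩ := hAmem j
    have hqp := hL.isStarProjection hq.prop.1
    have hPq := hL.commute hP hq.prop.1
    rw [← hqA, pLE_iff_le (hPp.mul_one_sub hqp hPq) hPp]
    exact hPp.mul_one_sub_le hqp hPq
  · have hFp := hL.isStarProjection hF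
    rw [pLE_iff_le hPp hFp]
    by_contra hPF
    obtain ⟨q, hFq, hq⟩ := hmax F hF hPF
    obtain ⟨j, hj⟩ : P * (1 - q) ∈ Set.range A := hA ▸ ⟨q, hq, rfl⟩
    have hAjF := hAF j
    rw [hj, pLE_iff_le (hPp.mul_one_sub (hL.isStarProjection hq.prop.1)
      (hL.commute hP hq.prop.1)) hFp] at hAjF
    exact hL.isCommProjSupClosed.not_mul_one_sub_le hP hq.prop.1 hq.prop.2 (hAjF.trans hFq)

end IsCSL

end Operators

theorem stmt9_general
    (L : Set (H →L[ℂ] H)) (hL : IsCSL L)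
    (hsg : ∀ P ∈ L, ∃ x : H, P x = x ∧ orbit L x = (LinearMap.range (P : H →ₗ[ℂ] H) : Set H)) :
    ∀ P ∈ L, P ≠ 0 → HyperatomicIn L P := by
  intro P hP _
  obtain ⟨x, hx, horb⟩ := hsg P hP
  obtain ⟨δ, hδ, hfar⟩ := exists_pos_le_norm_one_sub_apply hL hP horb
  exact hL.hyperatomicIn_of_finite hP (hL.finite_atomsUnder hP hx hδ hfar)
    fun F hF hPF => hL.exists_le_maximal hP hx hδ hfar hF hPF

/-- if every element of the CSL `L` (on a separable space) is singly generated,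
then `L` is hyperatomic. -/
theorem stmt9 [TopologicalSpace.SeparableSpace H]
    (L : Set (H →L[ℂ] H)) (hL : IsCSL L)
    (hsg : ∀ P ∈ L, ∃ x : H, P x = x ∧ orbit L x = (LinearMap.range (P : H →ₗ[ℂ] H) : Set H)) :
    ∀ P ∈ L, P ≠ 0 → HyperatomicIn L P :=
  stmt9_general L hL hsg
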